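/- If a T-tree C is not canonical, then there exists a T-tree C' isomorphic to C with C' ⋞ C and C' ≠ C; hence a ⋞-minimal element of an isomorphism class is canonical. -/

import Mathlib

/-- A T-tree: a node labeled by a type (ℕ), with children grouped into
    T-lists (one list per component type, in type order). -/
inductive TTree : Type where
  | node : ℕ → List (List TTree) → TTree

namespace TTree

/-- The root type (label) of a T-tree. -/
def label : TTree → ℕ
  | .node a _ => a

/-- The list of T-lists of a T-tree. -/
def tlists : TTree → List (List TTree)
  | .node _ ls => ls

/-- A T-tree is a leaf iff all its T-lists are empty. -/
def isLeaf : TTree → Bool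
  | .node _ ls => ls.all List.isEmpty

mutual
  /-- Comparison of T-trees: root types first, then the sequences of T-lists
      lexicographically by the T-list order ≪. -/
  def cmpT : TTree → TTree → Ordering
    | .node a ls, .node b ls' => (compare a b).then (cmpOuter ls ls')
  /-- Lexicographic comparison of sequences of T-lists by ≪
      (≪ compares T-lists by length first, then lexicographically by ⋞). -/
  def cmpOuter : List (List TTree) → List (List TTree) → Ordering
    | [], [] => .eq
    | [], _ :: _ => .lt
    | _ :: _, [] => .gt
    | l :: ls, l' :: ls' =>
        (((compare l.length l'.length).then (cmpInner l l')).then (cmpOuter ls ls'))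
  /-- Lexicographic comparison of equal-length T-lists by ⋞. -/
  def cmpInner : List TTree → List TTree → Ordering
    | [], [] => .eq
    | [], _ :: _ => .lt
    | _ :: _, [] => .gt
    | a :: as, b :: bs => (cmpT a b).then (cmpInner as bs)
end

/-- The order ⋞ on T-trees. -/
def le (C C' : TTree) : Prop := cmpT C C' ≠ .gt

/-- The order ≪ on T-lists: length first, then lexicographically by ⋞. -/
def lle (L L' : List TTree) : Prop :=
  ((compare L.length L'.length).then (cmpInner L L')) ≠ .gt

/-- Canonicity of a T-tree: every T-list sorted non-decreasingly by ⋞,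
    every subtree canonical. -/
inductive Canonical : TTree → Prop where
  | mk (a : ℕ) (ls : List (List TTree))
      (hsorted : ∀ L ∈ ls, L.Chain' le)
      (hrec : ∀ L ∈ ls, ∀ c ∈ L, Canonical c) :
      Canonical (.node a ls)

end TTree

namespace TTree

mutual
  /-- Isomorphism of T-trees: same root type, and the T-lists are pairwise
      related by permutation up to isomorphism, recursively. -/
  inductive Iso : TTree → TTree → Prop where
    | mk (a : ℕ) (ls ls' : List (List TTree)) :
        IsoOuter ls ls' → Iso (.node a ls) (.node a ls')
  /-- Pointwise relation between the sequences of T-lists. -/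
  inductive IsoOuter : List (List TTree) → List (List TTree) → Prop where
    | nil : IsoOuter [] []
    | cons {L L' : List TTree} {ls ls' : List (List TTree)} :
        IsoList L L' → IsoOuter ls ls' → IsoOuter (L :: ls) (L' :: ls')
  /-- Permutation of a T-list up to isomorphism of its members. -/
  inductive IsoList : List TTree → List TTree → Prop where
    | nil : IsoList [] []
    | cons {a b : TTree} {l₁ l₂ : List TTree} :
        Iso a b → IsoList l₁ l₂ → IsoList (a :: l₁) (b :: l₂)
    | swap (a b : TTree) (l : List TTree) : IsoList (a :: b :: l) (b :: a :: l)
    | trans {l₁ l₂ l₃ : List TTree} :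
        IsoList l₁ l₂ → IsoList l₂ l₃ → IsoList l₁ l₃
end

end TTree


namespace TTree

theorem then_eq_lt {o p : Ordering} : o.then p = .lt ↔ o = .lt ∨ (o = .eq ∧ p = .lt) := by
  cases o <;> simp [Ordering.then]

theorem then_eq_gt {o p : Ordering} : o.then p = .gt ↔ o = .gt ∨ (o = .eq ∧ p = .gt) := by
  cases o <;> simp [Ordering.then]

theorem then_eq_eq {o p : Ordering} : o.then p = .eq ↔ o = .eq ∧ p = .eq := by
  cases o <;> simp [Ordering.then]

theorem nat_compare_swap (a b : ℕ) : compare b a = (compare a b).swap := by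
  rcases lt_trichotomy a b with h|h|h
  · simp [compare_lt_iff_lt.mpr h, compare_gt_iff_gt.mpr h, Ordering.swap]
  · simp [h, compare_eq_iff_eq.mpr rfl, Ordering.swap]
  · simp [compare_lt_iff_lt.mpr h, compare_gt_iff_gt.mpr h, Ordering.swap]

mutual
theorem cmpT_refl : ∀ a, cmpT a a = .eq
  | .node a ls => by
    rw [cmpT, compare_eq_iff_eq.mpr rfl, cmpOuter_refl ls]; rfl
theorem cmpOuter_refl : ∀ ls, cmpOuter ls ls = .eq
  | [] => by rw [cmpOuter]
  | l :: ls => by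
    rw [cmpOuter, compare_eq_iff_eq.mpr rfl, cmpInner_refl l, cmpOuter_refl ls]; rfl
theorem cmpInner_refl : ∀ L, cmpInner L L = .eq
  | [] => by rw [cmpInner]
  | t :: ts => by rw [cmpInner, cmpT_refl t, cmpInner_refl ts]; rfl
end

mutual
theorem eq_of_cmpT : ∀ a b, cmpT a b = .eq → a = b
  | .node a ls, .node b ls', h => by
    rw [cmpT, then_eq_eq] at h
    obtain ⟨h1, h2⟩ := h
    rw [compare_eq_iff_eq] at h1
    rw [h1, eq_of_cmpOuter _ _ h2]
theorem eq_of_cmpOuter : ∀ ls ls', cmpOuter ls ls' = .eq → ls = ls'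
  | [], [], _ => rfl
  | [], _ :: _, h => by rw [cmpOuter] at h; exact absurd h (by simp)
  | _ :: _, [], h => by rw [cmpOuter] at h; exact absurd h (by simp)
  | l :: ls, l' :: ls', h => by
    rw [cmpOuter, then_eq_eq, then_eq_eq] at h
    obtain ⟨⟨_, h2⟩, h3⟩ := h
    rw [eq_of_cmpInner _ _ h2, eq_of_cmpOuter _ _ h3]
theorem eq_of_cmpInner : ∀ L L', cmpInner L L' = .eq → L = L'
  | [], [], _ => rfl
  | [], _ :: _, h => by rw [cmpInner] at h; exact absurd h (by simp)
  | _ :: _, [], h => by rw [cmpInner] at h; exact absurd h (by simp)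
  | a :: as, b :: bs, h => by
    rw [cmpInner, then_eq_eq] at h
    rw [eq_of_cmpT _ _ h.1, eq_of_cmpInner _ _ h.2]
end

mutual
theorem cmpT_swap : ∀ a b, cmpT b a = (cmpT a b).swap
  | .node a ls, .node b ls' => by
    rw [cmpT, cmpT, Ordering.swap_then, nat_compare_swap, cmpOuter_swap ls ls']
theorem cmpOuter_swap : ∀ ls ls', cmpOuter ls' ls = (cmpOuter ls ls').swap
  | [], [] => rfl
  | [], _ :: _ => rfl
  | _ :: _, [] => rfl
  | l :: ls, l' :: ls' => by
    rw [cmpOuter, cmpOuter, Ordering.swap_then, Ordering.swap_then,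
      nat_compare_swap, cmpInner_swap l l', cmpOuter_swap ls ls']
theorem cmpInner_swap : ∀ L L', cmpInner L' L = (cmpInner L L').swap
  | [], [] => rfl
  | [], _ :: _ => rfl
  | _ :: _, [] => rfl
  | a :: as, b :: bs => by
    rw [cmpInner, cmpInner, Ordering.swap_then, cmpT_swap a b, cmpInner_swap as bs]
end

mutual
theorem cmpT_lt_trans : ∀ a b c, cmpT a b = .lt → cmpT b c = .lt → cmpT a c = .lt
  | .node a ls, .node b ls', .node c ls'', h1, h2 => by
    rw [cmpT, then_eq_lt] at h1 h2 ⊢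
    rcases h1 with h1 | ⟨h1e, h1o⟩
    · rcases h2 with h2 | ⟨h2e, _⟩
      · exact Or.inl (compare_lt_iff_lt.mpr
          (lt_trans (compare_lt_iff_lt.mp h1) (compare_lt_iff_lt.mp h2)))
      · rw [compare_eq_iff_eq] at h2e; subst h2e; exact Or.inl h1
    · rw [compare_eq_iff_eq] at h1e; subst h1e
      rcases h2 with h2 | ⟨h2e, h2o⟩
      · exact Or.inl h2
      · exact Or.inr ⟨h2e, cmpOuter_lt_trans _ _ _ h1o h2o⟩
theorem cmpOuter_lt_trans :
    ∀ ls ls' ls'', cmpOuter ls ls' = .lt → cmpOuter ls' ls'' = .lt → cmpOuter ls ls'' = .lt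
  | [], [], _, h1, _ => by rw [cmpOuter] at h1; exact absurd h1 (by simp)
  | [], _ :: _, [], _, h2 => by rw [cmpOuter] at h2; exact absurd h2 (by simp)
  | [], _ :: _, _ :: _, _, _ => by rw [cmpOuter]
  | _ :: _, [], _, h1, _ => by rw [cmpOuter] at h1; exact absurd h1 (by simp)
  | _ :: _, _ :: _, [], _, h2 => by rw [cmpOuter] at h2; exact absurd h2 (by simp)
  | l :: ls, l' :: ls', l'' :: ls'', h1, h2 => by
    rw [cmpOuter, then_eq_lt, then_eq_lt, then_eq_eq] at h1 h2 ⊢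
    rcases h1 with (h1 | ⟨h1e, h1i⟩) | ⟨⟨h1e, h1i⟩, h1o⟩
    · rcases h2 with (h2 | ⟨h2e, _⟩) | ⟨⟨h2e, _⟩, _⟩ <;>
        [skip; rw [compare_eq_iff_eq] at h2e; rw [compare_eq_iff_eq] at h2e] <;>
      · refine Or.inl (Or.inl ?_)
        first
        | exact compare_lt_iff_lt.mpr
            (lt_trans (compare_lt_iff_lt.mp h1) (compare_lt_iff_lt.mp h2))
        | (rw [← h2e] at *; exact h1)
    · rw [compare_eq_iff_eq] at h1e
      rcases h2 with (h2 | ⟨h2e, h2i⟩) | ⟨⟨h2e, h2i⟩, _⟩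
      · exact Or.inl (Or.inl (by rw [compare_lt_iff_lt] at h2 ⊢; omega))
      · exact Or.inl (Or.inr ⟨by rw [compare_eq_iff_eq] at h2e ⊢; omega,
          cmpInner_lt_trans _ _ _ h1i h2i⟩)
      · rw [eq_of_cmpInner _ _ h2i] at h1i h1e
        exact Or.inl (Or.inr ⟨compare_eq_iff_eq.mpr h1e, h1i⟩)
    · obtain rfl := eq_of_cmpInner _ _ h1i
      rcases h2 with (h2 | ⟨h2e, h2i⟩) | ⟨⟨h2e, h2i⟩, h2o⟩
      · exact Or.inl (Or.inl h2)
      · exact Or.inl (Or.inr ⟨h2e, h2i⟩)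
      · exact Or.inr ⟨⟨h2e, h2i⟩, cmpOuter_lt_trans _ _ _ h1o h2o⟩
theorem cmpInner_lt_trans :
    ∀ L L' L'', cmpInner L L' = .lt → cmpInner L' L'' = .lt → cmpInner L L'' = .lt
  | [], [], _, h1, _ => by rw [cmpInner] at h1; exact absurd h1 (by simp)
  | [], _ :: _, [], _, h2 => by rw [cmpInner] at h2; exact absurd h2 (by simp)
  | [], _ :: _, _ :: _, _, _ => by rw [cmpInner]
  | _ :: _, [], _, h1, _ => by rw [cmpInner] at h1; exact absurd h1 (by simp)
  | _ :: _, _ :: _, [], _, h2 => by rw [cmpInner] at h2; exact absurd h2 (by simp)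
  | a :: as, b :: bs, c :: cs, h1, h2 => by
    rw [cmpInner, then_eq_lt] at h1 h2 ⊢
    rcases h1 with h1 | ⟨h1e, h1i⟩
    · rcases h2 with h2 | ⟨h2e, _⟩
      · exact Or.inl (cmpT_lt_trans _ _ _ h1 h2)
      · rw [eq_of_cmpT _ _ h2e] at h1; exact Or.inl h1
    · rw [eq_of_cmpT _ _ h1e] at *
      rcases h2 with h2 | ⟨h2e, h2i⟩
      · exact Or.inl h2
      · exact Or.inr ⟨h2e, cmpInner_lt_trans _ _ _ h1i h2i⟩
end

end TTree


namespace TTree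

theorem cmpT_le_trans {a b c : TTree} (h1 : cmpT a b ≠ .gt) (h2 : cmpT b c ≠ .gt) :
    cmpT a c ≠ .gt := by
  cases hab : cmpT a b with
  | gt => exact absurd hab h1
  | eq => rw [eq_of_cmpT _ _ hab]; exact h2
  | lt =>
    cases hbc : cmpT b c with
    | gt => exact absurd hbc h2
    | eq => rw [← eq_of_cmpT _ _ hbc]; rw [hab]; simp
    | lt => rw [cmpT_lt_trans _ _ _ hab hbc]; simp

theorem cmpInner_le_trans {a b c : List TTree} (h1 : cmpInner a b ≠ .gt)
    (h2 : cmpInner b c ≠ .gt) : cmpInner a c ≠ .gt := by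
  cases hab : cmpInner a b with
  | gt => exact absurd hab h1
  | eq => rw [eq_of_cmpInner _ _ hab]; exact h2
  | lt =>
    cases hbc : cmpInner b c with
    | gt => exact absurd hbc h2
    | eq => rw [← eq_of_cmpInner _ _ hbc]; rw [hab]; simp
    | lt => rw [cmpInner_lt_trans _ _ _ hab hbc]; simp

theorem cmpT_le_total (a b : TTree) : cmpT a b ≠ .gt ∨ cmpT b a ≠ .gt := by
  cases h : cmpT a b with
  | gt => right; rw [cmpT_swap a b, h]; simp [Ordering.swap]
  | eq => left; simp
  | lt => left; simp

theorem cmpT_le_antisymm {a b : TTree} (h1 : cmpT a b ≠ .gt) (h2 : cmpT b a ≠ .gt) :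
    a = b := by
  apply eq_of_cmpT
  rw [cmpT_swap a b] at h2
  cases h : cmpT a b <;> rw [h] at h1 h2 <;> simp_all [Ordering.swap]

/-- Sorting of a T-list by ⋞. -/
def sortL (L : List TTree) : List TTree := L.mergeSort (fun x y => cmpT x y != .gt)

mutual
/-- The canonical representative of the isomorphism class of a T-tree. -/
def canonT : TTree → TTree
  | .node a ls => .node a (canonOuter ls)
def canonOuter : List (List TTree) → List (List TTree)
  | [] => []
  | L :: ls => sortL (canonInner L) :: canonOuter ls
def canonInner : List TTree → List TTree
  | [] => []
  | t :: ts => canonT t :: canonInner ts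
end

theorem canonInner_length (L : List TTree) : (canonInner L).length = L.length := by
  induction L with
  | nil => rw [canonInner]
  | cons t ts ih => rw [canonInner]; simp [ih]

mutual
theorem iso_refl : ∀ t, Iso t t
  | .node a ls => .mk a ls ls (isoOuter_refl ls)
theorem isoOuter_refl : ∀ ls, IsoOuter ls ls
  | [] => .nil
  | L :: ls => .cons (isoList_refl L) (isoOuter_refl ls)
theorem isoList_refl : ∀ L, IsoList L L
  | [] => .nil
  | t :: ts => .cons (iso_refl t) (isoList_refl ts)
end

theorem isoList_of_perm {L L' : List TTree} (h : L.Perm L') : IsoList L L' := by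
  induction h with
  | nil => exact .nil
  | cons a _ ih => exact .cons (iso_refl a) ih
  | swap a b l => exact .swap _ _ _
  | trans _ _ ih1 ih2 => exact .trans ih1 ih2

mutual
theorem iso_canonT : ∀ t, Iso t (canonT t)
  | .node a ls => by rw [canonT]; exact .mk a ls _ (isoOuter_canon ls)
theorem isoOuter_canon : ∀ ls, IsoOuter ls (canonOuter ls)
  | [] => by rw [canonOuter]; exact .nil
  | L :: ls => by
    rw [canonOuter]
    exact .cons (IsoList.trans (isoList_canonInner L)
      (isoList_of_perm (List.mergeSort_perm _ _).symm)) (isoOuter_canon ls)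
theorem isoList_canonInner : ∀ L, IsoList L (canonInner L)
  | [] => by rw [canonInner]; exact .nil
  | t :: ts => by rw [canonInner]; exact .cons (iso_canonT t) (isoList_canonInner ts)
end

theorem sorted_perm_le {M' M : List TTree} (hs : M'.Pairwise le) (hp : M'.Perm M) :
    cmpInner M' M ≠ .gt := by
  induction M' generalizing M with
  | nil =>
    rw [hp.symm.eq_nil, cmpInner]; simp
  | cons a as ih =>
    cases M with
    | nil => exact absurd hp.eq_nil (by simp)
    | cons b bs =>
      have hb : b ∈ a :: as := hp.mem_iff.mpr List.mem_cons_self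
      have hab : cmpT a b ≠ .gt := by
        rcases List.mem_cons.mp hb with rfl | hb
        · rw [cmpT_refl]; simp
        · exact List.rel_of_pairwise_cons hs hb
      rw [cmpInner]
      cases h : cmpT a b with
      | gt => exact absurd h hab
      | lt => simp [Ordering.then]
      | eq =>
        obtain rfl := eq_of_cmpT _ _ h
        have := ih hs.of_cons hp.cons_inv
        simpa [Ordering.then] using this

theorem bne_gt_iff (o : Ordering) : (o != .gt) = true ↔ o ≠ .gt := by
  cases o <;> simp <;> decide

theorem le_bool_trans : ∀ a b c : TTree, (cmpT a b != .gt) = true →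
    (cmpT b c != .gt) = true → (cmpT a c != .gt) = true := by
  intro a b c h1 h2
  rw [bne_gt_iff] at h1 h2 ⊢
  exact cmpT_le_trans h1 h2

theorem le_bool_total : ∀ a b : TTree, ((cmpT a b != .gt) || (cmpT b a != .gt)) = true := by
  intro a b
  rcases cmpT_le_total a b with h | h <;> simp [bne_gt_iff, h]

theorem sortL_pairwise (M : List TTree) : (sortL M).Pairwise le := by
  have := List.pairwise_mergeSort le_bool_trans le_bool_total M
  exact this.imp (fun h => by rw [bne_gt_iff] at h; exact h)

mutual
theorem le_canonT : ∀ t, cmpT (canonT t) t ≠ .gt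
  | .node a ls => by
    rw [canonT, cmpT, compare_eq_iff_eq.mpr rfl]
    simpa [Ordering.then] using le_canonOuter ls
theorem le_canonOuter : ∀ ls, cmpOuter (canonOuter ls) ls ≠ .gt
  | [] => by rw [canonOuter, cmpOuter]; simp
  | L :: ls => by
    rw [canonOuter, cmpOuter]
    have hlen : (sortL (canonInner L)).length = L.length := by
      rw [sortL, List.length_mergeSort, canonInner_length]
    have hinner : cmpInner (sortL (canonInner L)) L ≠ .gt :=
      cmpInner_le_trans
        (sorted_perm_le (sortL_pairwise _) (List.mergeSort_perm _ _))
        (le_canonInner L)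
    have houter := le_canonOuter ls
    rw [compare_eq_iff_eq.mpr hlen]
    show ((cmpInner (sortL (canonInner L)) L).then (cmpOuter (canonOuter ls) ls)) ≠ .gt
    simp only [ne_eq, then_eq_gt]
    rintro (h | ⟨_, h⟩)
    · exact hinner h
    · exact houter h
theorem le_canonInner : ∀ L, cmpInner (canonInner L) L ≠ .gt
  | [] => by rw [canonInner, cmpInner]; simp
  | t :: ts => by
    rw [canonInner, cmpInner]
    have h1 := le_canonT t
    have h2 := le_canonInner ts
    simp only [ne_eq, then_eq_gt]
    rintro (h | ⟨_, h⟩)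
    · exact h1 h
    · exact h2 h
end

mutual
theorem canonT_canonical : ∀ t, Canonical (canonT t)
  | .node a ls => by
    rw [canonT]
    exact .mk a _ (fun L hL => (canonOuter_spec ls L hL).1)
      (fun L hL c hc => (canonOuter_spec ls L hL).2 c hc)
theorem canonOuter_spec : ∀ ls, ∀ L ∈ canonOuter ls, L.Chain' le ∧ ∀ c ∈ L, Canonical c
  | [], L, hL => by rw [canonOuter] at hL; simp at hL
  | L0 :: ls, L, hL => by
    rw [canonOuter] at hL
    rcases List.mem_cons.mp hL with rfl | hL
    · refine ⟨(sortL_pairwise _).isChain, fun c hc => ?_⟩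
      have : c ∈ canonInner L0 := (List.mergeSort_perm _ _).mem_iff.mp hc
      exact canonInner_spec L0 c this
    · exact canonOuter_spec ls L hL
theorem canonInner_spec : ∀ L, ∀ c ∈ canonInner L, Canonical c
  | [], c, hc => by rw [canonInner] at hc; simp at hc
  | t :: ts, c, hc => by
    rw [canonInner] at hc
    rcases List.mem_cons.mp hc with rfl | hc
    · exact canonT_canonical t
    · exact canonInner_spec ts c hc
end

end TTree

/-- If a T-tree `C` is not canonical, then some distinct isomorphic T-tree is
    ⋞-below it; hence any ⋞-minimal element of an isomorphism class is
    canonical. -/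
theorem non_canonical_not_min :
    (∀ C : TTree, ¬ TTree.Canonical C →
      ∃ C' : TTree, TTree.Iso C C' ∧ TTree.le C' C ∧ C' ≠ C) ∧
    (∀ C : TTree, (∀ C' : TTree, TTree.Iso C C' → TTree.le C C') →
      TTree.Canonical C) := by
  have key : ∀ C : TTree, ¬ TTree.Canonical C →
      ∃ C' : TTree, TTree.Iso C C' ∧ TTree.le C' C ∧ C' ≠ C := by
    intro C hC
    refine ⟨TTree.canonT C, TTree.iso_canonT C, TTree.le_canonT C, fun h => ?_⟩
    exact hC (h ▸ TTree.canonT_canonical C)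
  refine ⟨key, fun C hmin => ?_⟩
  by_contra hC
  obtain ⟨C', hiso, hle, hne⟩ := key C hC
  exact hne (TTree.cmpT_le_antisymm hle (hmin C' hiso))
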